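/- The function K defined by K(x) = (√π/2) · (e^{−x²}/x) · erfi(x) maps the interval (0, ∞) bijectively onto the interval (0, 1); in particular its inverse K⁻¹ : (0, 1) → (0, ∞) is well defined. -/

import Mathlib

open Real

/-- The imaginary error function `erfi x = (2/√π) ∫₀ˣ e^{t²} dt`. -/
noncomputable def erfi (x : ℝ) : ℝ :=
  (2 / Real.sqrt π) * ∫ t in (0:ℝ)..x, Real.exp (t ^ 2)

/-- `K x = (√π/2) · (e^{−x²}/x) · erfi x`. -/
noncomputable def K (x : ℝ) : ℝ :=
  (Real.sqrt π / 2) * (Real.exp (-x ^ 2) / x) * erfi x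

/-!
Write `K x = e^{-x²} F(x) / x` with `F(x) = ∫₀ˣ e^{t²} dt`. Three comparisons of `F` with
elementary functions, each proved by checking the sign of a derivative on `(0, ∞)`, give
`1 / (1 + 2x²) < K x < 1` and `K x < 1 / x²`. Since `F' = e^{x²}`, one computes
`K' = (1 - (1 + 2x²) K) / x`, which the lower bound makes negative, so `K` is strictly
decreasing; the bounds give `K → 1` at `0⁺` and `K → 0` at `∞`, and the intermediate value
theorem gives surjectivity onto `(0, 1)`.
-/

open Filter Set Topology

lemma lt_of_hasDerivAt_pos {f f' : ℝ → ℝ} (hf : ∀ x, HasDerivAt f (f' x) x)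
    (hf' : ∀ x, 0 < x → 0 < f' x) {x : ℝ} (hx : 0 < x) : f 0 < f x := by
  have hmono : StrictMonoOn f (Ici 0) :=
    strictMonoOn_of_deriv_pos (convex_Ici 0)
      (fun y _ => (hf y).continuousAt.continuousWithinAt)
      (fun y hy => by rw [(hf y).deriv]; exact hf' y (by simpa using hy))
  exact hmono self_mem_Ici hx.le hx

noncomputable def expSqIntegral (x : ℝ) : ℝ := ∫ t in (0:ℝ)..x, exp (t ^ 2)

lemma continuous_exp_sq : Continuous fun t : ℝ => exp (t ^ 2) := by fun_prop

lemma hasDerivAt_expSqIntegral (x : ℝ) : HasDerivAt expSqIntegral (exp (x ^ 2)) x :=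
  intervalIntegral.integral_hasDerivAt_right (continuous_exp_sq.intervalIntegrable _ _)
    continuous_exp_sq.aestronglyMeasurable.stronglyMeasurableAtFilter
    continuous_exp_sq.continuousAt

@[simp]
lemma expSqIntegral_zero : expSqIntegral 0 = 0 := intervalIntegral.integral_same

lemma expSqIntegral_pos {x : ℝ} (hx : 0 < x) : 0 < expSqIntegral x :=
  intervalIntegral.intervalIntegral_pos_of_pos (continuous_exp_sq.intervalIntegrable _ _)
    (fun _ => exp_pos _) hx

lemma hasDerivAt_exp_sq (x : ℝ) :
    HasDerivAt (fun x : ℝ => exp (x ^ 2)) (2 * x * exp (x ^ 2)) x := by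
  simpa [mul_comm] using (hasDerivAt_pow 2 x).exp

lemma expSqIntegral_lt {x : ℝ} (hx : 0 < x) : expSqIntegral x < x * exp (x ^ 2) := by
  have hderiv (y : ℝ) : HasDerivAt (fun y => y * exp (y ^ 2) - expSqIntegral y)
      (2 * y ^ 2 * exp (y ^ 2)) y :=
    (((hasDerivAt_id' y).mul (hasDerivAt_exp_sq y)).sub
      (hasDerivAt_expSqIntegral y)).congr_deriv (by ring)
  have := lt_of_hasDerivAt_pos hderiv (fun y hy => by positivity) hx
  norm_num at this
  linarith

lemma mul_expSqIntegral_lt {x : ℝ} (hx : 0 < x) : x * expSqIntegral x < exp (x ^ 2) - 1 := by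
  have hderiv (y : ℝ) : HasDerivAt (fun y => exp (y ^ 2) - y * expSqIntegral y)
      (y * exp (y ^ 2) - expSqIntegral y) y :=
    ((hasDerivAt_exp_sq y).sub
      ((hasDerivAt_id' y).mul (hasDerivAt_expSqIntegral y))).congr_deriv (by ring)
  have := lt_of_hasDerivAt_pos hderiv (fun y hy => sub_pos.2 (expSqIntegral_lt hy)) hx
  norm_num at this
  linarith

lemma lt_one_add_two_mul_sq_mul_expSqIntegral {x : ℝ} (hx : 0 < x) :
    x * exp (x ^ 2) < (1 + 2 * x ^ 2) * expSqIntegral x := by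
  have hderiv (y : ℝ) : HasDerivAt (fun y => (1 + 2 * y ^ 2) * expSqIntegral y - y * exp (y ^ 2))
      (4 * y * expSqIntegral y) y := by
    have hpoly : HasDerivAt (fun y : ℝ => 1 + 2 * y ^ 2) (4 * y) y :=
      (((hasDerivAt_pow 2 y).const_mul 2).const_add 1).congr_deriv (by norm_num; ring)
    exact ((hpoly.mul (hasDerivAt_expSqIntegral y)).sub
      ((hasDerivAt_id' y).mul (hasDerivAt_exp_sq y))).congr_deriv (by ring)
  have := lt_of_hasDerivAt_pos hderiv
    (fun y hy => mul_pos (by positivity) (expSqIntegral_pos hy)) hx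
  norm_num at this
  linarith

lemma K_eq (x : ℝ) : K x = exp (-x ^ 2) * expSqIntegral x / x := by
  have : sqrt π ≠ 0 := by positivity
  unfold K erfi expSqIntegral
  field_simp

lemma hasDerivAt_K {x : ℝ} (hx : x ≠ 0) :
    HasDerivAt K ((1 - (1 + 2 * x ^ 2) * K x) / x) x := by
  have hgauss : HasDerivAt (fun x : ℝ => exp (-x ^ 2)) (-(2 * x) * exp (-x ^ 2)) x := by
    simpa [mul_comm] using (hasDerivAt_pow 2 x).neg.exp
  have hquot := ((hgauss.mul (hasDerivAt_expSqIntegral x)).div (hasDerivAt_id' x) hx)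
  rw [show K = fun x => exp (-x ^ 2) * expSqIntegral x / x from funext K_eq]
  refine hquot.congr_deriv ?_
  have hcancel : exp (-x ^ 2) * exp (x ^ 2) = 1 := by rw [← exp_add]; simp
  simp only [Pi.mul_apply]
  field_simp
  linear_combination x * hcancel

lemma K_pos {x : ℝ} (hx : 0 < x) : 0 < K x := by
  rw [K_eq]
  exact div_pos (mul_pos (exp_pos _) (expSqIntegral_pos hx)) hx

lemma K_lt_one {x : ℝ} (hx : 0 < x) : K x < 1 := by
  have h := expSqIntegral_lt hx
  rw [K_eq, exp_neg]
  field_simp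
  linarith

lemma K_lt_inv_sq {x : ℝ} (hx : 0 < x) : K x < (x ^ 2)⁻¹ := by
  have h := mul_expSqIntegral_lt hx
  rw [K_eq, exp_neg]
  field_simp
  nlinarith

lemma inv_one_add_two_mul_sq_lt_K {x : ℝ} (hx : 0 < x) : (1 + 2 * x ^ 2)⁻¹ < K x := by
  have h := lt_one_add_two_mul_sq_mul_expSqIntegral hx
  rw [K_eq, exp_neg]
  field_simp
  linarith

lemma continuousOn_K : ContinuousOn K (Ioi 0) :=
  fun _ hx => (hasDerivAt_K (ne_of_gt hx)).continuousAt.continuousWithinAt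

lemma strictAntiOn_K : StrictAntiOn K (Ioi 0) := by
  refine strictAntiOn_of_deriv_neg (convex_Ioi 0) continuousOn_K fun x hx => ?_
  rw [interior_Ioi] at hx
  rw [(hasDerivAt_K (ne_of_gt hx)).deriv]
  have := (inv_lt_iff_one_lt_mul₀ (by positivity)).1 (inv_one_add_two_mul_sq_lt_K hx)
  exact div_neg_of_neg_of_pos (by linarith) hx

lemma tendsto_K_nhdsGT_zero : Tendsto K (𝓝[>] 0) (𝓝 1) := by
  have hlower : Tendsto (fun x : ℝ => (1 + 2 * x ^ 2)⁻¹) (𝓝[>] 0) (𝓝 1) := by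
    have : Continuous fun x : ℝ => (1 + 2 * x ^ 2)⁻¹ :=
      (by fun_prop : Continuous fun x : ℝ => 1 + 2 * x ^ 2).inv₀ fun x => by positivity
    simpa using (this.tendsto 0).mono_left nhdsWithin_le_nhds
  refine tendsto_of_tendsto_of_tendsto_of_le_of_le' hlower tendsto_const_nhds ?_ ?_ <;>
    filter_upwards [self_mem_nhdsWithin] with x hx
  exacts [(inv_one_add_two_mul_sq_lt_K hx).le, (K_lt_one hx).le]

lemma tendsto_K_atTop : Tendsto K atTop (𝓝 0) := by
  refine tendsto_of_tendsto_of_tendsto_of_le_of_le' tendsto_const_nhds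
    (tendsto_inv_atTop_zero.comp (tendsto_pow_atTop two_ne_zero)) ?_ ?_ <;>
    filter_upwards [Ioi_mem_atTop 0] with x hx
  exacts [(K_pos hx).le, (K_lt_inv_sq hx).le]

/-- `K` maps `(0, ∞)` bijectively onto `(0, 1)`. -/
theorem K_bijOn : Set.BijOn K (Set.Ioi (0 : ℝ)) (Set.Ioo (0 : ℝ) 1) := by
  refine ⟨fun x hx => ⟨K_pos hx, K_lt_one hx⟩, strictAntiOn_K.injOn, ?_⟩
  exact isPreconnected_Ioi.intermediate_value_Ioo (le_principal_iff.2 (Ioi_mem_atTop 0))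
    (le_principal_iff.2 self_mem_nhdsWithin) continuousOn_K tendsto_K_atTop tendsto_K_nhdsGT_zero
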